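/- arXiv:2605.19140 — 2 statements merged into one kernel-verified Lean document; each statement's English description precedes it below -/
import Mathlib

section
/- One-step perturbation bound between AIS-induced and latent Bellman operators: let T₁ and T₂ be random-duration Bellman optimality operators built from rewards R₁, R₂ and kernels p₁, p₂ with the same γ and τmax. Suppose |R₁(s,a) − R₂(s,a)| ≤ ε for all (s,a), and let D := max_{(s,a)} Σ_{(s',τ)} |p₁(s,a)(s',τ) − p₂(s,a)(s',τ)|·γ^τ. Then for every Q : S×A → ℝ with ‖Q‖∞ ≤ M, one has ‖T₁ Q − T₂ Q‖∞ ≤ ε + M·D. -/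
/-!
Pointwise, `T₁ Q − T₂ Q` is the reward difference plus `Σ (p₁ − p₂)(s',τ) γ^τ V(s')` with
`V(s') = max_{a'} Q(s',a')`, and `|V| ≤ ‖Q‖∞ ≤ M`. Since `γ ≥ 0`, the triangle inequality bounds the
second term by `M Σ |p₁ − p₂| γ^τ ≤ M D`.
-/

open Finset

/-- A random-duration transition kernel: for each `(s, a)`, the weights
`p s a s' τ` over `S × {1,…,τmax}` are nonnegative and sum to one. -/
def IsKernel {S A : Type*} [Fintype S] (τmax : ℕ) (p : S → A → S → ℕ → ℝ) : Prop :=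
  ∀ s a, (∀ s' τ, 0 ≤ p s a s' τ) ∧
    ∑ s' : S, ∑ τ ∈ Finset.Icc 1 τmax, p s a s' τ = 1

/-- The effective discount `γ̄ := max_{(s,a)} Σ_{(s',τ)} p(s,a)(s',τ) γ^τ`. -/
noncomputable def effDiscount {S A : Type*} [Fintype S] [Fintype A] [Nonempty S] [Nonempty A]
    (γ : ℝ) (τmax : ℕ) (p : S → A → S → ℕ → ℝ) : ℝ :=
  Finset.univ.sup' Finset.univ_nonempty fun sa : S × A =>
    ∑ s' : S, ∑ τ ∈ Finset.Icc 1 τmax, p sa.1 sa.2 s' τ * γ ^ τ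

/-- The sup norm `‖f‖∞ = max_{(s,a)} |f(s,a)|` on functions `S × A → ℝ`. -/
noncomputable def supNorm {S A : Type*} [Fintype S] [Fintype A] [Nonempty S] [Nonempty A]
    (f : S → A → ℝ) : ℝ :=
  Finset.univ.sup' Finset.univ_nonempty fun sa : S × A => |f sa.1 sa.2|

/-- The random-duration Bellman optimality operator:
`(T Q)(s,a) = R(s,a) + Σ_{(s',τ)} p(s,a)(s',τ) γ^τ max_{a'} Q(s',a')`. -/
noncomputable def bellman {S A : Type*} [Fintype S] [Fintype A] [Nonempty A]
    (γ : ℝ) (τmax : ℕ) (p : S → A → S → ℕ → ℝ) (R : S → A → ℝ)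
    (Q : S → A → ℝ) : S → A → ℝ :=
  fun s a => R s a + ∑ s' : S, ∑ τ ∈ Finset.Icc 1 τmax,
    p s a s' τ * γ ^ τ * Finset.univ.sup' Finset.univ_nonempty (Q s')

/-- The `γ`-weighted kernel discrepancy
`D := max_{(s,a)} Σ_{(s',τ)} |p₁(s,a)(s',τ) − p₂(s,a)(s',τ)| γ^τ`. -/
noncomputable def kernelDiscrepancy {S A : Type*} [Fintype S] [Fintype A] [Nonempty S] [Nonempty A]
    (γ : ℝ) (τmax : ℕ) (p₁ p₂ : S → A → S → ℕ → ℝ) : ℝ :=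
  Finset.univ.sup' Finset.univ_nonempty fun sa : S × A =>
    ∑ s' : S, ∑ τ ∈ Finset.Icc 1 τmax,
      |p₁ sa.1 sa.2 s' τ - p₂ sa.1 sa.2 s' τ| * γ ^ τ

theorem Finset.abs_sup'_le {ι : Type*} {s : Finset ι} (H : s.Nonempty) {f : ι → ℝ} {c : ℝ}
    (hf : ∀ i ∈ s, |f i| ≤ c) : |s.sup' H f| ≤ c := by
  obtain ⟨i, hi⟩ := H
  refine abs_le.mpr ⟨?_, sup'_le _ _ fun j hj => (le_abs_self _).trans (hf j hj)⟩
  exact (neg_le_of_abs_le (hf i hi)).trans (le_sup' f hi)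

theorem Finset.abs_sum_mul_le {ι : Type*} (s : Finset ι) (c v : ι → ℝ) {M : ℝ}
    (hv : ∀ i ∈ s, |v i| ≤ M) : |∑ i ∈ s, c i * v i| ≤ M * ∑ i ∈ s, |c i| := by
  calc |∑ i ∈ s, c i * v i| ≤ ∑ i ∈ s, |c i| * M :=
        (abs_sum_le_sum_abs _ _).trans <| sum_le_sum fun i hi => by
          rw [abs_mul]; exact mul_le_mul_of_nonneg_left (hv i hi) (abs_nonneg _)
    _ = M * ∑ i ∈ s, |c i| := by rw [mul_sum]; simp_rw [mul_comm]

section SupNorm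

variable {S A : Type*} [Fintype S] [Fintype A] [Nonempty S] [Nonempty A]

theorem abs_le_supNorm (f : S → A → ℝ) (s : S) (a : A) : |f s a| ≤ supNorm f :=
  le_sup' (fun sa : S × A => |f sa.1 sa.2|) (mem_univ (s, a))

theorem supNorm_nonneg (f : S → A → ℝ) : 0 ≤ supNorm f :=
  (abs_nonneg _).trans (abs_le_supNorm f (Classical.arbitrary S) (Classical.arbitrary A))

theorem supNorm_le {f : S → A → ℝ} {c : ℝ} (hf : ∀ s a, |f s a| ≤ c) : supNorm f ≤ c :=
  sup'_le _ _ fun sa _ => hf sa.1 sa.2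

theorem discrepancy_le_kernelDiscrepancy (γ : ℝ) (τmax : ℕ) (p₁ p₂ : S → A → S → ℕ → ℝ)
    (s : S) (a : A) :
    ∑ s' : S, ∑ τ ∈ Icc 1 τmax, |p₁ s a s' τ - p₂ s a s' τ| * γ ^ τ
      ≤ kernelDiscrepancy γ τmax p₁ p₂ :=
  le_sup' (f := fun sa : S × A => ∑ s' : S, ∑ τ ∈ Icc 1 τmax,
    |p₁ sa.1 sa.2 s' τ - p₂ sa.1 sa.2 s' τ| * γ ^ τ) (mem_univ (s, a))

end SupNorm

section Bellman

variable {S A : Type*} [Fintype S] [Fintype A] [Nonempty A]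

theorem bellman_sub_bellman (γ : ℝ) (τmax : ℕ) (p₁ p₂ : S → A → S → ℕ → ℝ) (R₁ R₂ Q : S → A → ℝ)
    (s : S) (a : A) :
    bellman γ τmax p₁ R₁ Q s a - bellman γ τmax p₂ R₂ Q s a =
      R₁ s a - R₂ s a + ∑ x ∈ univ ×ˢ Icc 1 τmax,
        (p₁ s a x.1 x.2 - p₂ s a x.1 x.2) * γ ^ x.2 *
          univ.sup' univ_nonempty (Q x.1) := by
  simp only [bellman, sum_product, sub_mul, sum_sub_distrib]
  ring

theorem abs_bellman_sub_bellman_le {γ : ℝ} (hγ : 0 ≤ γ) (τmax : ℕ) (p₁ p₂ : S → A → S → ℕ → ℝ)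
    (R₁ R₂ : S → A → ℝ) {M : ℝ} {Q : S → A → ℝ} (hQ : ∀ s a, |Q s a| ≤ M) (s : S) (a : A) :
    |bellman γ τmax p₁ R₁ Q s a - bellman γ τmax p₂ R₂ Q s a| ≤
      |R₁ s a - R₂ s a| +
        M * ∑ s' : S, ∑ τ ∈ Icc 1 τmax, |p₁ s a s' τ - p₂ s a s' τ| * γ ^ τ := by
  have hV : ∀ x ∈ univ ×ˢ Icc 1 τmax,
      |univ.sup' univ_nonempty (Q x.1)| ≤ M := fun x _ =>
    abs_sup'_le _ fun a' _ => hQ x.1 a'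
  rw [bellman_sub_bellman]
  refine (abs_add_le _ _).trans (add_le_add le_rfl ?_)
  refine (abs_sum_mul_le _ _ _ hV).trans_eq ?_
  simp only [sum_product, abs_mul, abs_pow, abs_of_nonneg hγ]

end Bellman

theorem bellman_perturbation_general {S A : Type*} [Fintype S] [Fintype A] [Nonempty S] [Nonempty A]
    (γ : ℝ) (hγ0 : 0 < γ) (τmax : ℕ)
    (p₁ p₂ : S → A → S → ℕ → ℝ)
    (R₁ R₂ : S → A → ℝ) (ε : ℝ) (hε : ∀ s a, |R₁ s a - R₂ s a| ≤ ε)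
    (M : ℝ) (Q : S → A → ℝ) (hQ : supNorm Q ≤ M) :
    supNorm (fun s a => bellman γ τmax p₁ R₁ Q s a - bellman γ τmax p₂ R₂ Q s a)
      ≤ ε + M * kernelDiscrepancy γ τmax p₁ p₂ := by
  have hM : 0 ≤ M := (supNorm_nonneg Q).trans hQ
  have hQ' : ∀ s a, |Q s a| ≤ M := fun s a => (abs_le_supNorm Q s a).trans hQ
  refine supNorm_le fun s a => (abs_bellman_sub_bellman_le hγ0.le τmax p₁ p₂ R₁ R₂ hQ' s a).trans ?_
  gcongr
  exacts [hε s a, discrepancy_le_kernelDiscrepancy γ τmax p₁ p₂ s a]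

/-- one-step perturbation bound between two random-duration
Bellman operators: `‖T₁ Q − T₂ Q‖∞ ≤ ε + M D` whenever `‖Q‖∞ ≤ M`. -/
theorem bellman_perturbation {S A : Type*} [Fintype S] [Fintype A] [Nonempty S] [Nonempty A]
    (γ : ℝ) (hγ0 : 0 < γ) (hγ1 : γ < 1) (τmax : ℕ) (hτmax : 1 ≤ τmax)
    (p₁ p₂ : S → A → S → ℕ → ℝ) (hp₁ : IsKernel τmax p₁) (hp₂ : IsKernel τmax p₂)
    (R₁ R₂ : S → A → ℝ) (ε : ℝ) (hε : ∀ s a, |R₁ s a - R₂ s a| ≤ ε)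
    (M : ℝ) (Q : S → A → ℝ) (hQ : supNorm Q ≤ M) :
    supNorm (fun s a => bellman γ τmax p₁ R₁ Q s a - bellman γ τmax p₂ R₂ Q s a)
      ≤ ε + M * kernelDiscrepancy γ τmax p₁ p₂ :=
  bellman_perturbation_general γ hγ0 τmax p₁ p₂ R₁ R₂ ε hε M Q hQ
end

section
/- Strong monotonicity of the mean-path update under the random-discount covariance condition (linearized form of the paper's strong-monotonicity lemma): suppose the feature covariance Σ_μ is symmetric positive definite with smallest eigenvalue λ₀ > 0, and there exists ν ∈ (0,1) such that for every policy π : S → A and every v ∈ ℝ^d, vᵀ Σ_π v ≤ (1−ν)² vᵀ Σ_μ v, where Σ_π := Σ_{(s,a)} μ(s,a) Σ_{(s',τ)} p(s,a)(s',τ)·γ^{2τ}·g(s', π(s')) g(s', π(s'))ᵀ. Then for all θ, θ* ∈ ℝ^d, ⟨θ − θ*, h̄(θ) − h̄(θ*)⟩ ≥ ν λ₀ ‖θ − θ*‖². -/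
open Finset

/-- The mean-path update
`h̄(θ) = Σ_{(s,a)} μ(s,a) g(s,a) (⟨g(s,a),θ⟩ − R(s,a) − Σ_{(s',τ)} p(s,a)(s',τ) γ^τ max_{a'} ⟨g(s',a'),θ⟩)`. -/
noncomputable def meanPath {S A : Type*} [Fintype S] [Fintype A] [Nonempty A] {d : ℕ}
    (γ : ℝ) (τmax : ℕ) (p : S → A → S → ℕ → ℝ) (R : S → A → ℝ)
    (μ : S → A → ℝ) (g : S → A → EuclideanSpace ℝ (Fin d))
    (θ : EuclideanSpace ℝ (Fin d)) : EuclideanSpace ℝ (Fin d) :=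
  ∑ s : S, ∑ a : A,
    (μ s a * ((inner ℝ (g s a) θ : ℝ) - R s a -
        ∑ s' : S, ∑ τ ∈ Finset.Icc 1 τmax, p s a s' τ * γ ^ τ *
          Finset.univ.sup' Finset.univ_nonempty
            (fun a' : A => (inner ℝ (g s' a') θ : ℝ)))) • g s a

/-
The difference of the two updates pairs `w = θ − θ⋆` with `Σ_μ w` minus a cross term in
which the next-state maxima enter only through `max_{a'} ⟨g, θ⟩ − max_{a'} ⟨g, θ⋆⟩`.
That difference is bounded in absolute value by `|⟨g(s', π s'), w⟩|` for a suitable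
policy `π`, so two weighted Cauchy–Schwarz inequalities (over `(s', τ)`, then over
`(s, a)`) and the covariance domination bound the cross term by `(1 − ν) wᵀ Σ_μ w`.
Hence the pairing is at least `ν wᵀ Σ_μ w ≥ ν λ₀ ‖w‖²`.
-/

open scoped RealInnerProductSpace

section WeightedCauchySchwarz

variable {ι κ : Type*} (s : Finset ι) (t : Finset κ)

theorem sq_sum_sum_mul_mul_le (w x y : ι → κ → ℝ)
    (hw : ∀ i ∈ s, ∀ j ∈ t, 0 ≤ w i j) :
    (∑ i ∈ s, ∑ j ∈ t, w i j * x i j * y i j) ^ 2 ≤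
      (∑ i ∈ s, ∑ j ∈ t, w i j * x i j ^ 2) *
        ∑ i ∈ s, ∑ j ∈ t, w i j * y i j ^ 2 := by
  simp only [← sum_product']
  refine sum_sq_le_sum_mul_sum_of_sq_le_mul _ (fun k hk => ?_) (fun k hk => ?_)
    (fun k _ => (by ring : _ = _).le)
  all_goals
    obtain ⟨hi, hj⟩ := mem_product.1 hk
    have := hw _ hi _ hj
    positivity

theorem sq_sum_sum_mul_le_sum_sum_mul_sq (p x : ι → κ → ℝ)
    (hp : ∀ i ∈ s, ∀ j ∈ t, 0 ≤ p i j) (hp1 : ∑ i ∈ s, ∑ j ∈ t, p i j = 1) :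
    (∑ i ∈ s, ∑ j ∈ t, p i j * x i j) ^ 2 ≤ ∑ i ∈ s, ∑ j ∈ t, p i j * x i j ^ 2 := by
  simpa [hp1] using sq_sum_sum_mul_mul_le s t p x 1 hp

end WeightedCauchySchwarz

theorem Finset.exists_abs_sup'_sub_sup'_le {ι : Type*} (s : Finset ι) (H : s.Nonempty)
    (f g : ι → ℝ) : ∃ i ∈ s, |s.sup' H f - s.sup' H g| ≤ |f i - g i| := by
  obtain ⟨i, hi, hfi⟩ := exists_mem_eq_sup' H f
  obtain ⟨j, hj, hgj⟩ := exists_mem_eq_sup' H g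
  rcases le_total (s.sup' H g) (s.sup' H f) with h | h
  · refine ⟨i, hi, ?_⟩
    rw [abs_of_nonneg (sub_nonneg.2 h)]
    exact (by linarith [le_sup' g hi] : _ ≤ f i - g i).trans (le_abs_self _)
  · refine ⟨j, hj, ?_⟩
    rw [abs_of_nonpos (sub_nonpos.2 h), abs_sub_comm]
    exact (by linarith [le_sup' f hj] : _ ≤ g j - f j).trans (le_abs_self _)

section MeanPath

variable {S A : Type*} [Fintype A] {d : ℕ}

noncomputable def greedyValue [Nonempty A] (g : S → A → EuclideanSpace ℝ (Fin d))
    (θ : EuclideanSpace ℝ (Fin d)) (s' : S) : ℝ :=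
  univ.sup' univ_nonempty fun a' => ⟪g s' a', θ⟫

theorem exists_policy_sq_greedyValue_sub_le [Nonempty A]
    (g : S → A → EuclideanSpace ℝ (Fin d)) (θ θ' : EuclideanSpace ℝ (Fin d)) :
    ∃ π : S → A, ∀ s',
      (greedyValue g θ s' - greedyValue g θ' s') ^ 2 ≤ ⟪g s' (π s'), θ - θ'⟫ ^ 2 := by
  choose π _ hπ using fun s' => exists_abs_sup'_sub_sup'_le univ univ_nonempty
    (fun a' => ⟪g s' a', θ⟫) (fun a' => ⟪g s' a', θ'⟫)
  exact ⟨π, fun s' => by rw [inner_sub_right]; exact sq_le_sq.2 (hπ s')⟩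

variable [Fintype S]

theorem inner_sub_meanPath_sub [Nonempty A] (γ : ℝ) (τmax : ℕ)
    (p : S → A → S → ℕ → ℝ) (R : S → A → ℝ) (μ : S → A → ℝ) (g : S → A → EuclideanSpace ℝ (Fin d))
    (θ θ' : EuclideanSpace ℝ (Fin d)) :
    ⟪θ - θ', meanPath γ τmax p R μ g θ - meanPath γ τmax p R μ g θ'⟫ =
      ∑ s, ∑ a, μ s a * ⟪g s a, θ - θ'⟫ ^ 2 -
        ∑ s, ∑ a, μ s a * ⟪g s a, θ - θ'⟫ * ∑ s', ∑ τ ∈ Icc 1 τmax,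
          p s a s' τ * γ ^ τ * (greedyValue g θ s' - greedyValue g θ' s') := by
  simp only [meanPath, greedyValue, inner_sub_right, inner_sum, real_inner_smul_right,
    ← sum_sub_distrib]
  refine sum_congr rfl fun s _ => sum_congr rfl fun a _ => ?_
  simp only [real_inner_comm (g s a), inner_sub_right, mul_sub, sum_sub_distrib]
  ring

theorem sum_mul_sum_discounted_le (T : Finset ℕ) (γ c : ℝ) (p : S → A → S → ℕ → ℝ)
    (μ F : S → A → ℝ) (D Y : S → ℝ) (hμ : ∀ s a, 0 ≤ μ s a)
    (hp : ∀ s a s' τ, 0 ≤ p s a s' τ) (hp1 : ∀ s a, ∑ s', ∑ τ ∈ T, p s a s' τ = 1)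
    (hc : 0 ≤ c) (hDY : ∀ s', D s' ^ 2 ≤ Y s')
    (hY : ∑ s, ∑ a, μ s a * ∑ s', ∑ τ ∈ T, p s a s' τ * γ ^ (2 * τ) * Y s' ≤
      c ^ 2 * ∑ s, ∑ a, μ s a * F s a ^ 2) :
    ∑ s, ∑ a, μ s a * F s a * ∑ s', ∑ τ ∈ T, p s a s' τ * γ ^ τ * D s' ≤
      c * ∑ s, ∑ a, μ s a * F s a ^ 2 := by
  set E := ∑ s, ∑ a, μ s a * F s a ^ 2
  have hE : 0 ≤ E :=
    sum_nonneg fun s _ => sum_nonneg fun a _ => mul_nonneg (hμ s a) (sq_nonneg _)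
  set X : S → A → ℝ := fun s a => ∑ s', ∑ τ ∈ T, p s a s' τ * γ ^ τ * D s' with hX_def
  have hX : ∀ s a, X s a ^ 2 ≤ ∑ s', ∑ τ ∈ T, p s a s' τ * γ ^ (2 * τ) * Y s' := by
    intro s a
    have hJensen := sq_sum_sum_mul_le_sum_sum_mul_sq univ T (p s a)
      (fun s' τ => γ ^ τ * D s') (fun s' _ τ _ => hp s a s' τ) (hp1 s a)
    simp only [hX_def, mul_assoc, mul_pow, ← pow_mul'] at hJensen ⊢
    refine hJensen.trans (sum_le_sum fun s' _ => sum_le_sum fun τ _ => ?_)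
    have := hp s a s' τ
    have := (even_two_mul τ).pow_nonneg γ
    gcongr
    exact hDY s'
  have hμX : ∑ s, ∑ a, μ s a * X s a ^ 2 ≤ c ^ 2 * E :=
    (sum_le_sum fun s _ => sum_le_sum fun a _ =>
      mul_le_mul_of_nonneg_left (hX s a) (hμ s a)).trans hY
  have hcross : (∑ s, ∑ a, μ s a * F s a * X s a) ^ 2 ≤ (c * E) ^ 2 :=
    calc _ ≤ E * ∑ s, ∑ a, μ s a * X s a ^ 2 :=
          sq_sum_sum_mul_mul_le univ univ μ F X fun s _ a _ => hμ s a
      _ ≤ E * (c ^ 2 * E) := mul_le_mul_of_nonneg_left hμX hE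
      _ = (c * E) ^ 2 := by ring
  exact le_of_sq_le_sq hcross (mul_nonneg hc hE)

end MeanPath

theorem strong_monotonicity_general {S A : Type*} [Fintype S] [Fintype A] [Nonempty A]
    {d : ℕ}
    (γ : ℝ) (τmax : ℕ)
    (p : S → A → S → ℕ → ℝ)
    (hp : ∀ s a, (∀ s' τ, 0 ≤ p s a s' τ) ∧
      ∑ s' : S, ∑ τ ∈ Finset.Icc 1 τmax, p s a s' τ = 1)
    (R : S → A → ℝ)
    (μ : S → A → ℝ) (hμ0 : ∀ s a, 0 ≤ μ s a)
    (g : S → A → EuclideanSpace ℝ (Fin d))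
    (lam0 : ℝ)
    -- `Σ_μ` is positive definite with smallest eigenvalue `lam0`:
    (hPD : ∀ v : EuclideanSpace ℝ (Fin d),
      lam0 * ‖v‖ ^ 2 ≤ ∑ s : S, ∑ a : A, μ s a * (inner ℝ (g s a) v : ℝ) ^ 2)
    (ν : ℝ) (hν0 : 0 < ν) (hν1 : ν < 1)
    -- `vᵀ Σ_π v ≤ (1 − ν)² vᵀ Σ_μ v` for every policy `π` and every `v`:
    (hA6 : ∀ (π : S → A) (v : EuclideanSpace ℝ (Fin d)),
      ∑ s : S, ∑ a : A, μ s a *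
          ∑ s' : S, ∑ τ ∈ Finset.Icc 1 τmax,
            p s a s' τ * γ ^ (2 * τ) * (inner ℝ (g s' (π s')) v : ℝ) ^ 2
        ≤ (1 - ν) ^ 2 * ∑ s : S, ∑ a : A, μ s a * (inner ℝ (g s a) v : ℝ) ^ 2)
    (θ θstar : EuclideanSpace ℝ (Fin d)) :
    ν * lam0 * ‖θ - θstar‖ ^ 2
      ≤ (inner ℝ (θ - θstar)
          (meanPath γ τmax p R μ g θ - meanPath γ τmax p R μ g θstar) : ℝ) := by
  obtain ⟨π, hπ⟩ := exists_policy_sq_greedyValue_sub_le g θ θstar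
  have hcross := sum_mul_sum_discounted_le _ γ (1 - ν) p μ _ _ _ hμ0 (fun s a => (hp s a).1)
    (fun s a => (hp s a).2) (by linarith) hπ (hA6 π (θ - θstar))
  rw [inner_sub_meanPath_sub]
  linarith [mul_le_mul_of_nonneg_left (hPD (θ - θstar)) hν0.le]

/-- strong monotonicity of the mean-path update under the
random-discount covariance condition: if the feature covariance has smallest
eigenvalue `lam0 > 0` and the worst-case next-state feature covariance under the
random discount `γ^{2τ}` is dominated by `(1 − ν)² Σ_μ` for every policy, then
`⟨θ − θ⋆, h̄(θ) − h̄(θ⋆)⟩ ≥ ν lam0 ‖θ − θ⋆‖²`. -/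
theorem strong_monotonicity {S A : Type*} [Fintype S] [Fintype A] [Nonempty S] [Nonempty A]
    {d : ℕ} (hd : 1 ≤ d)
    (γ : ℝ) (hγ0 : 0 < γ) (hγ1 : γ < 1) (τmax : ℕ) (hτmax : 1 ≤ τmax)
    (p : S → A → S → ℕ → ℝ)
    (hp : ∀ s a, (∀ s' τ, 0 ≤ p s a s' τ) ∧
      ∑ s' : S, ∑ τ ∈ Finset.Icc 1 τmax, p s a s' τ = 1)
    (R : S → A → ℝ)
    (μ : S → A → ℝ) (hμ0 : ∀ s a, 0 ≤ μ s a) (hμ1 : ∑ s : S, ∑ a : A, μ s a = 1)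
    (g : S → A → EuclideanSpace ℝ (Fin d))
    (lam0 : ℝ) (hlam0 : 0 < lam0)
    -- `Σ_μ` is positive definite with smallest eigenvalue `lam0`:
    (hPD : ∀ v : EuclideanSpace ℝ (Fin d),
      lam0 * ‖v‖ ^ 2 ≤ ∑ s : S, ∑ a : A, μ s a * (inner ℝ (g s a) v : ℝ) ^ 2)
    (ν : ℝ) (hν0 : 0 < ν) (hν1 : ν < 1)
    -- `vᵀ Σ_π v ≤ (1 − ν)² vᵀ Σ_μ v` for every policy `π` and every `v`:
    (hA6 : ∀ (π : S → A) (v : EuclideanSpace ℝ (Fin d)),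
      ∑ s : S, ∑ a : A, μ s a *
          ∑ s' : S, ∑ τ ∈ Finset.Icc 1 τmax,
            p s a s' τ * γ ^ (2 * τ) * (inner ℝ (g s' (π s')) v : ℝ) ^ 2
        ≤ (1 - ν) ^ 2 * ∑ s : S, ∑ a : A, μ s a * (inner ℝ (g s a) v : ℝ) ^ 2)
    (θ θstar : EuclideanSpace ℝ (Fin d)) :
    ν * lam0 * ‖θ - θstar‖ ^ 2
      ≤ (inner ℝ (θ - θstar)
          (meanPath γ τmax p R μ g θ - meanPath γ τmax p R μ g θstar) : ℝ) :=
  strong_monotonicity_general γ τmax p hp R μ hμ0 g lam0 hPD ν hν0 hν1 hA6 θ θstar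
end
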